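/- Double-negation elimination for translated formulae: for every formula A ∈ L_Σ, the labeled sequent w : ¬¬(A^N) ⊢ w : A^N is derivable in the refined labeled calculus L*_Σ(𝒜), where A^N is the double-negation translation of A. -/
import Mathlib


namespace IGL

/-- An alphabet Σ: a nonempty countable type of characters partitioned into a
forward part and a backward part by an involutive converse operation. -/
structure Alphabet where
  Char : Type
  nonempty : Nonempty Char
  countable : Countable Char
  fwd : Char → Prop
  conv : Char → Char
  conv_conv : ∀ x, conv (conv x) = x
  fwd_iff : ∀ x, fwd x ↔ ¬ fwd (conv x)

/-- Formulae of the intuitionistic multi-modal language `L_Σ`. -/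
inductive Formula (C : Type) : Type
  | atom : ℕ → Formula C
  | bot  : Formula C
  | or   : Formula C → Formula C → Formula C
  | and  : Formula C → Formula C → Formula C
  | imp  : Formula C → Formula C → Formula C
  | dia  : C → Formula C → Formula C
  | box  : C → Formula C → Formula C

namespace Formula
/-- Intuitionistic negation `¬A := A ⊃ ⊥`. -/
def neg {C : Type} (A : Formula C) : Formula C := A.imp Formula.bot
/-- `A ≡ B := (A ⊃ B) ∧ (B ⊃ A)`. -/
def equiv {C : Type} (A B : Formula C) : Formula C := (A.imp B).and (B.imp A)
end Formula

/-- Bi-relational Σ-models. -/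
structure BiModel (α : Alphabet) where
  W : Type
  nonempty : Nonempty W
  le : W → W → Prop
  le_refl : ∀ w, le w w
  le_trans : ∀ w u v, le w u → le u v → le w v
  R : α.Char → W → W → Prop
  F1 : ∀ x w v v', R x w v → le v v' → ∃ w', le w w' ∧ R x w' v'
  F2 : ∀ x w w' v, le w w' → R x w v → ∃ v', R x w' v' ∧ le v v'
  F3 : ∀ x w u, R x w u ↔ R (α.conv x) u w
  V : W → ℕ → Prop
  mono : ∀ w u, le w u → ∀ p, V w p → V u p

/-- Satisfaction `M,w ⊩ A`. -/
def Sat {α : Alphabet} (M : BiModel α) : M.W → Formula α.Char → Prop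
  | w, Formula.atom p => M.V w p
  | _, Formula.bot => False
  | w, Formula.or A B => Sat M w A ∨ Sat M w B
  | w, Formula.and A B => Sat M w A ∧ Sat M w B
  | w, Formula.imp A B => ∀ w', M.le w w' → Sat M w' A → Sat M w' B
  | w, Formula.dia x A => ∃ v, M.R x w v ∧ Sat M v A
  | w, Formula.box x A => ∀ w' v', M.le w w' → M.R x w' v' → Sat M v' A

/-- Axioms: seriality axioms `D_x` or intuitionistic path axioms
`(⟨x₁⟩⋯⟨xₙ⟩A ⊃ ⟨x⟩A) ∧ ([x]A ⊃ [x₁]⋯[xₙ]A)`, encoded by the character `x`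
and the string `[x₁,…,xₙ]`. -/
inductive Ax (C : Type) : Type
  | ser : C → Ax C
  | ipa : C → List C → Ax C

/-- Composition of the accessibility relations along a string. -/
def BiModel.Rs {α : Alphabet} (M : BiModel α) : List α.Char → M.W → M.W → Prop
  | [], w, u => w = u
  | x :: s, w, u => ∃ v, M.R x w v ∧ M.Rs s v u

/-- The frame condition corresponding to an axiom. -/
def SatisfiesAx {α : Alphabet} (M : BiModel α) : Ax α.Char → Prop
  | Ax.ser x => ∀ w, ∃ u, M.R x w u
  | Ax.ipa x s => ∀ w u, M.Rs s w u → M.R x w u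

/-- A bi-relational (Σ,𝒜)-model. -/
def AModel {α : Alphabet} (𝒜 : Set (Ax α.Char)) (M : BiModel α) : Prop :=
  ∀ a ∈ 𝒜, SatisfiesAx M a

/-- `⟨x₁⟩⋯⟨xₙ⟩A`. -/
def dias {C : Type} : List C → Formula C → Formula C
  | [], A => A
  | x :: s, A => Formula.dia x (dias s A)

/-- `[x₁]⋯[xₙ]A`. -/
def boxes {C : Type} : List C → Formula C → Formula C
  | [], A => A
  | x :: s, A => Formula.box x (boxes s A)

/-- The Hilbert system `H IK_m(Σ,𝒜)`. -/
inductive Hprf (α : Alphabet) (𝒜 : Set (Ax α.Char)) : Formula α.Char → Prop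
  | ipl1 (A B : Formula α.Char) : Hprf α 𝒜 (A.imp (B.imp A))
  | ipl2 (A B C : Formula α.Char) : Hprf α 𝒜 ((A.imp (B.imp C)).imp ((A.imp B).imp (A.imp C)))
  | ipl3 (A B : Formula α.Char) : Hprf α 𝒜 (A.imp (A.or B))
  | ipl4 (A B : Formula α.Char) : Hprf α 𝒜 (B.imp (A.or B))
  | ipl5 (A B C : Formula α.Char) : Hprf α 𝒜 ((A.imp C).imp ((B.imp C).imp ((A.or B).imp C)))
  | ipl6 (A B : Formula α.Char) : Hprf α 𝒜 ((A.and B).imp A)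
  | ipl7 (A B : Formula α.Char) : Hprf α 𝒜 ((A.and B).imp B)
  | ipl8 (A B : Formula α.Char) : Hprf α 𝒜 (A.imp (B.imp (A.and B)))
  | ipl9 (A : Formula α.Char) : Hprf α 𝒜 (Formula.bot.imp A)
  | axK (x : α.Char) (A B : Formula α.Char) : Hprf α 𝒜 ((Formula.box x (A.imp B)).imp ((Formula.box x A).imp (Formula.box x B)))
  | axBoxAnd (x : α.Char) (A B : Formula α.Char) : Hprf α 𝒜 ((Formula.box x (A.and B)).equiv ((Formula.box x A).and (Formula.box x B)))
  | axDiaOr (x : α.Char) (A B : Formula α.Char) : Hprf α 𝒜 ((Formula.dia x (A.or B)).equiv ((Formula.dia x A).or (Formula.dia x B)))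
  | axKdia (x : α.Char) (A B : Formula α.Char) : Hprf α 𝒜 ((Formula.box x (A.imp B)).imp ((Formula.dia x A).imp (Formula.dia x B)))
  | axBoxDia (x : α.Char) (A B : Formula α.Char) : Hprf α 𝒜 (((Formula.box x A).and (Formula.dia x B)).imp (Formula.dia x (A.and B)))
  | axNotDiaBot (x : α.Char) : Hprf α 𝒜 (Formula.dia x Formula.bot).neg
  | axConv (x : α.Char) (A : Formula α.Char) : Hprf α 𝒜 ((A.imp (Formula.box x (Formula.dia (α.conv x) A))).and
      ((Formula.dia x (Formula.box (α.conv x) A)).imp A))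
  | axFS (x : α.Char) (A B : Formula α.Char) : Hprf α 𝒜 (((Formula.dia x A).imp (Formula.box x B)).imp (Formula.box x (A.imp B)))
  | axDiaImp (x : α.Char) (A B : Formula α.Char) : Hprf α 𝒜 ((Formula.dia x (A.imp B)).imp ((Formula.box x A).imp (Formula.dia x B)))
  | axSer (x : α.Char) (A : Formula α.Char) (h : Ax.ser x ∈ 𝒜) : Hprf α 𝒜 ((Formula.box x A).imp (Formula.dia x A))
  | axIpa (x : α.Char) (s : List α.Char) (A : Formula α.Char) (h : Ax.ipa x s ∈ 𝒜) :
      Hprf α 𝒜 (((dias s A).imp (Formula.dia x A)).and ((Formula.box x A).imp (boxes s A)))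
  | mp (A B : Formula α.Char) : Hprf α 𝒜 (A.imp B) → Hprf α 𝒜 A → Hprf α 𝒜 B
  | nec (x : α.Char) (A : Formula α.Char) : Hprf α 𝒜 A → Hprf α 𝒜 (Formula.box x A)

/-- `B₁ ∧ ⋯ ∧ Bₙ` (left-nested). -/
def conjList {C : Type} : Formula C → List (Formula C) → Formula C
  | A, [] => A
  | A, B :: L => conjList (A.and B) L

/-- `𝒮 ⊢_𝒜 A`: either `A ∈ IK_m(Σ,𝒜)` or `B₁∧⋯∧Bₙ ⊃ A ∈ IK_m(Σ,𝒜)` for some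
`B₁,…,Bₙ ∈ 𝒮`. -/
def HderivFrom (α : Alphabet) (𝒜 : Set (Ax α.Char)) (S : Set (Formula α.Char))
    (A : Formula α.Char) : Prop :=
  Hprf α 𝒜 A ∨ ∃ B L, B ∈ S ∧ (∀ D ∈ L, D ∈ S) ∧ Hprf α 𝒜 ((conjList B L).imp A)

/-! ### Labeled sequents -/

/-- A relational atom `w R_x u`. -/
abbrev Rel (C : Type) := ℕ × C × ℕ
/-- A labeled formula `w : A`. -/
abbrev LF (C : Type) := ℕ × Formula C

def relLabels {C : Type} (R : Multiset (Rel C)) : Set ℕ :=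
  {l | ∃ a ∈ R, a.1 = l ∨ a.2.2 = l}

def lfLabels {C : Type} (Γ : Multiset (LF C)) : Set ℕ :=
  {l | ∃ b ∈ Γ, b.1 = l}

/-- `u` is fresh with respect to the sequent `R, Γ ⊢ v : ⋯`. -/
def freshIn {C : Type} (u : ℕ) (R : Multiset (Rel C)) (Γ : Multiset (LF C)) (v : ℕ) : Prop :=
  u ∉ relLabels R ∧ u ∉ lfLabels Γ ∧ u ≠ v

/-- `Chain s w u m`: the multiset `m` is a chain of relational atoms `w R_s u`
along the string `s` (with `w = u` and `m = 0` when `s = ε`). -/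
inductive Chain {C : Type} : List C → ℕ → ℕ → Multiset (Rel C) → Prop
  | nil (w : ℕ) : Chain [] w w 0
  | cons {x : C} {s : List C} {w v u : ℕ} {m : Multiset (Rel C)} :
      Chain s v u m → Chain (x :: s) w u ((w, x, v) ::ₘ m)

/-- The labeled calculus `L_Σ(𝒜)`, height-indexed: `LD α 𝒜 n R Γ w A` states
that the labeled sequent `R, Γ ⊢ w : A` has a proof of height at most `n`. -/
inductive LD (α : Alphabet) (𝒜 : Set (Ax α.Char)) :
    ℕ → Multiset (Rel α.Char) → Multiset (LF α.Char) → ℕ → Formula α.Char → Prop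
  | id (n : ℕ) (R : Multiset (Rel α.Char)) (Γ : Multiset (LF α.Char)) (w p : ℕ) : LD α 𝒜 n R ((w, Formula.atom p) ::ₘ Γ) w (Formula.atom p)
  | botL (n : ℕ) (R : Multiset (Rel α.Char)) (Γ : Multiset (LF α.Char)) (w u : ℕ) (A : Formula α.Char) : LD α 𝒜 n R ((w, Formula.bot) ::ₘ Γ) u A
  | orL {n : ℕ} {R : Multiset (Rel α.Char)} {Γ : Multiset (LF α.Char)} {w u : ℕ} {A B C : Formula α.Char} :
      LD α 𝒜 n R ((w, A) ::ₘ Γ) u C → LD α 𝒜 n R ((w, B) ::ₘ Γ) u C →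
      LD α 𝒜 (n + 1) R ((w, A.or B) ::ₘ Γ) u C
  | orR1 {n : ℕ} {R : Multiset (Rel α.Char)} {Γ : Multiset (LF α.Char)} {w : ℕ} {A B : Formula α.Char} : LD α 𝒜 n R Γ w A → LD α 𝒜 (n + 1) R Γ w (A.or B)
  | orR2 {n : ℕ} {R : Multiset (Rel α.Char)} {Γ : Multiset (LF α.Char)} {w : ℕ} {A B : Formula α.Char} : LD α 𝒜 n R Γ w B → LD α 𝒜 (n + 1) R Γ w (A.or B)
  | andL {n : ℕ} {R : Multiset (Rel α.Char)} {Γ : Multiset (LF α.Char)} {w u : ℕ} {A B C : Formula α.Char} :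
      LD α 𝒜 n R ((w, A) ::ₘ (w, B) ::ₘ Γ) u C →
      LD α 𝒜 (n + 1) R ((w, A.and B) ::ₘ Γ) u C
  | andR {n : ℕ} {R : Multiset (Rel α.Char)} {Γ : Multiset (LF α.Char)} {w : ℕ} {A B : Formula α.Char} :
      LD α 𝒜 n R Γ w A → LD α 𝒜 n R Γ w B → LD α 𝒜 (n + 1) R Γ w (A.and B)
  | impL {n : ℕ} {R : Multiset (Rel α.Char)} {Γ : Multiset (LF α.Char)} {w u : ℕ} {A B C : Formula α.Char} :
      LD α 𝒜 n R ((w, A.imp B) ::ₘ Γ) w A → LD α 𝒜 n R ((w, B) ::ₘ Γ) u C →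
      LD α 𝒜 (n + 1) R ((w, A.imp B) ::ₘ Γ) u C
  | impR {n : ℕ} {R : Multiset (Rel α.Char)} {Γ : Multiset (LF α.Char)} {w : ℕ} {A B : Formula α.Char} :
      LD α 𝒜 n R ((w, A) ::ₘ Γ) w B → LD α 𝒜 (n + 1) R Γ w (A.imp B)
  | diaL {n : ℕ} {R : Multiset (Rel α.Char)} {Γ : Multiset (LF α.Char)} {w u v : ℕ} {x : α.Char} {A B : Formula α.Char} (hf : freshIn u R ((w, Formula.dia x A) ::ₘ Γ) v) :
      LD α 𝒜 n ((w, x, u) ::ₘ R) ((u, A) ::ₘ Γ) v B →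
      LD α 𝒜 (n + 1) R ((w, Formula.dia x A) ::ₘ Γ) v B
  | diaR {n : ℕ} {R : Multiset (Rel α.Char)} {Γ : Multiset (LF α.Char)} {w u : ℕ} {x : α.Char} {A : Formula α.Char} :
      LD α 𝒜 n ((w, x, u) ::ₘ R) Γ u A →
      LD α 𝒜 (n + 1) ((w, x, u) ::ₘ R) Γ w (Formula.dia x A)
  | boxR {n : ℕ} {R : Multiset (Rel α.Char)} {Γ : Multiset (LF α.Char)} {w u : ℕ} {x : α.Char} {A : Formula α.Char} (hf : freshIn u R Γ w) :
      LD α 𝒜 n ((w, x, u) ::ₘ R) Γ u A → LD α 𝒜 (n + 1) R Γ w (Formula.box x A)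
  | boxL {n : ℕ} {R : Multiset (Rel α.Char)} {Γ : Multiset (LF α.Char)} {w u v : ℕ} {x : α.Char} {A C : Formula α.Char} :
      LD α 𝒜 n ((w, x, u) ::ₘ R) ((w, Formula.box x A) ::ₘ (u, A) ::ₘ Γ) v C →
      LD α 𝒜 (n + 1) ((w, x, u) ::ₘ R) ((w, Formula.box x A) ::ₘ Γ) v C
  | dx {n : ℕ} {R : Multiset (Rel α.Char)} {Γ : Multiset (LF α.Char)} {u v : ℕ} {x : α.Char} {A : Formula α.Char} (w : ℕ) (hax : Ax.ser x ∈ 𝒜) (hf : freshIn u R Γ v) :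
      LD α 𝒜 n ((w, x, u) ::ₘ R) Γ v A → LD α 𝒜 (n + 1) R Γ v A
  | isx {n : ℕ} {R : Multiset (Rel α.Char)} {Γ : Multiset (LF α.Char)} {w u v : ℕ} {s : List α.Char} {x : α.Char} {m : Multiset (Rel α.Char)} {A : Formula α.Char} (hax : Ax.ipa x s ∈ 𝒜) (hc : Chain s w u m) :
      LD α 𝒜 n ((w, x, u) ::ₘ (m + R)) Γ v A → LD α 𝒜 (n + 1) (m + R) Γ v A
  | cx {n : ℕ} {R : Multiset (Rel α.Char)} {Γ : Multiset (LF α.Char)} {w u v : ℕ} {x : α.Char} {A : Formula α.Char} :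
      LD α 𝒜 n ((w, x, u) ::ₘ (u, α.conv x, w) ::ₘ R) Γ v A →
      LD α 𝒜 (n + 1) ((w, x, u) ::ₘ R) Γ v A

/-- Derivability in `L_Σ(𝒜)`. -/
def LDeriv (α : Alphabet) (𝒜 : Set (Ax α.Char)) (R : Multiset (Rel α.Char))
    (Γ : Multiset (LF α.Char)) (w : ℕ) (A : Formula α.Char) : Prop :=
  ∃ n, LD α 𝒜 n R Γ w A

/-- (Σ,𝒜)-validity of a labeled sequent. -/
def SeqValid (α : Alphabet) (𝒜 : Set (Ax α.Char)) (R : Multiset (Rel α.Char))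
    (Γ : Multiset (LF α.Char)) (w : ℕ) (A : Formula α.Char) : Prop :=
  ∀ (M : BiModel α), AModel 𝒜 M → ∀ I : ℕ → M.W,
    (∀ a ∈ R, M.R a.2.1 (I a.1) (I a.2.2)) → (∀ b ∈ Γ, Sat M (I b.1) b.2) →
      Sat M (I w) A

/-! ### Grammars and propagation -/

/-- Converse of a string: `s̄ = x̄ₙ⋯x̄₁` for `s = x₁⋯xₙ`. -/
def convStr {C : Type} (cv : C → C) (s : List C) : List C := (s.map cv).reverse

/-- The 𝒜-grammar `g(𝒜)`. -/
def Gram (α : Alphabet) (𝒜 : Set (Ax α.Char)) : Set (α.Char × List α.Char) :=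
  {p | Ax.ipa p.1 p.2 ∈ 𝒜 ∨
        ∃ x s, Ax.ipa x s ∈ 𝒜 ∧ p.1 = α.conv x ∧ p.2 = convStr α.conv s}

/-- One-step derivation between strings in a grammar. -/
def Step {C : Type} (g : Set (C × List C)) (s t : List C) : Prop :=
  ∃ s₁ s₂ x r, (x, r) ∈ g ∧ s = s₁ ++ x :: s₂ ∧ t = s₁ ++ r ++ s₂

/-- The language of the character `x` relative to a grammar. -/
def Lang {C : Type} (g : Set (C × List C)) (x : C) : Set (List C) :=
  {t | Relation.ReflTransGen (Step g) [x] t}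

/-- An edge of the propagation graph `PG(R)`. -/
def PGEdge (α : Alphabet) (R : Multiset (Rel α.Char)) (a : ℕ) (x : α.Char) (b : ℕ) : Prop :=
  (a, x, b) ∈ R ∨ (b, α.conv x, a) ∈ R

/-- `PPath α R w u s`: there is a propagation path from `w` to `u` in `PG(R)`
whose string is `s`. -/
inductive PPath (α : Alphabet) (R : Multiset (Rel α.Char)) : ℕ → ℕ → List α.Char → Prop
  | nil (w : ℕ) : PPath α R w w []
  | cons {w v u : ℕ} {x : α.Char} {s : List α.Char} :
      PGEdge α R w x v → PPath α R v u s → PPath α R w u (x :: s)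

/-- Side condition of the propagation rules: there exists a propagation path
`π(w,u)` in `PG(R)` with `s_π(w,u) ∈ L_{g(𝒜)}(x)`. -/
def CanProp (α : Alphabet) (𝒜 : Set (Ax α.Char)) (R : Multiset (Rel α.Char))
    (w u : ℕ) (x : α.Char) : Prop :=
  ∃ s, PPath α R w u s ∧ s ∈ Lang (Gram α 𝒜) x

/-- The refined labeled calculus `L*_Σ(𝒜)`, height-indexed. -/
inductive LDs (α : Alphabet) (𝒜 : Set (Ax α.Char)) :
    ℕ → Multiset (Rel α.Char) → Multiset (LF α.Char) → ℕ → Formula α.Char → Prop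
  | id (n : ℕ) (R : Multiset (Rel α.Char)) (Γ : Multiset (LF α.Char)) (w p : ℕ) : LDs α 𝒜 n R ((w, Formula.atom p) ::ₘ Γ) w (Formula.atom p)
  | botL (n : ℕ) (R : Multiset (Rel α.Char)) (Γ : Multiset (LF α.Char)) (w u : ℕ) (A : Formula α.Char) : LDs α 𝒜 n R ((w, Formula.bot) ::ₘ Γ) u A
  | orL {n : ℕ} {R : Multiset (Rel α.Char)} {Γ : Multiset (LF α.Char)} {w u : ℕ} {A B C : Formula α.Char} :
      LDs α 𝒜 n R ((w, A) ::ₘ Γ) u C → LDs α 𝒜 n R ((w, B) ::ₘ Γ) u C →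
      LDs α 𝒜 (n + 1) R ((w, A.or B) ::ₘ Γ) u C
  | orR1 {n : ℕ} {R : Multiset (Rel α.Char)} {Γ : Multiset (LF α.Char)} {w : ℕ} {A B : Formula α.Char} : LDs α 𝒜 n R Γ w A → LDs α 𝒜 (n + 1) R Γ w (A.or B)
  | orR2 {n : ℕ} {R : Multiset (Rel α.Char)} {Γ : Multiset (LF α.Char)} {w : ℕ} {A B : Formula α.Char} : LDs α 𝒜 n R Γ w B → LDs α 𝒜 (n + 1) R Γ w (A.or B)
  | andL {n : ℕ} {R : Multiset (Rel α.Char)} {Γ : Multiset (LF α.Char)} {w u : ℕ} {A B C : Formula α.Char} :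
      LDs α 𝒜 n R ((w, A) ::ₘ (w, B) ::ₘ Γ) u C →
      LDs α 𝒜 (n + 1) R ((w, A.and B) ::ₘ Γ) u C
  | andR {n : ℕ} {R : Multiset (Rel α.Char)} {Γ : Multiset (LF α.Char)} {w : ℕ} {A B : Formula α.Char} :
      LDs α 𝒜 n R Γ w A → LDs α 𝒜 n R Γ w B → LDs α 𝒜 (n + 1) R Γ w (A.and B)
  | impL {n : ℕ} {R : Multiset (Rel α.Char)} {Γ : Multiset (LF α.Char)} {w u : ℕ} {A B C : Formula α.Char} :
      LDs α 𝒜 n R ((w, A.imp B) ::ₘ Γ) w A → LDs α 𝒜 n R ((w, B) ::ₘ Γ) u C →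
      LDs α 𝒜 (n + 1) R ((w, A.imp B) ::ₘ Γ) u C
  | impR {n : ℕ} {R : Multiset (Rel α.Char)} {Γ : Multiset (LF α.Char)} {w : ℕ} {A B : Formula α.Char} :
      LDs α 𝒜 n R ((w, A) ::ₘ Γ) w B → LDs α 𝒜 (n + 1) R Γ w (A.imp B)
  | diaL {n : ℕ} {R : Multiset (Rel α.Char)} {Γ : Multiset (LF α.Char)} {w u v : ℕ} {x : α.Char} {A B : Formula α.Char} (hf : freshIn u R ((w, Formula.dia x A) ::ₘ Γ) v) :
      LDs α 𝒜 n ((w, x, u) ::ₘ R) ((u, A) ::ₘ Γ) v B →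
      LDs α 𝒜 (n + 1) R ((w, Formula.dia x A) ::ₘ Γ) v B
  | boxR {n : ℕ} {R : Multiset (Rel α.Char)} {Γ : Multiset (LF α.Char)} {w u : ℕ} {x : α.Char} {A : Formula α.Char} (hf : freshIn u R Γ w) :
      LDs α 𝒜 n ((w, x, u) ::ₘ R) Γ u A → LDs α 𝒜 (n + 1) R Γ w (Formula.box x A)
  | dx {n : ℕ} {R : Multiset (Rel α.Char)} {Γ : Multiset (LF α.Char)} {u v : ℕ} {x : α.Char} {A : Formula α.Char} (w : ℕ) (hax : Ax.ser x ∈ 𝒜) (hf : freshIn u R Γ v) :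
      LDs α 𝒜 n ((w, x, u) ::ₘ R) Γ v A → LDs α 𝒜 (n + 1) R Γ v A
  | pdia {n : ℕ} {R : Multiset (Rel α.Char)} {Γ : Multiset (LF α.Char)} {u : ℕ} {x : α.Char} {A : Formula α.Char} (w : ℕ) (h : CanProp α 𝒜 R w u x) :
      LDs α 𝒜 n R Γ u A → LDs α 𝒜 (n + 1) R Γ w (Formula.dia x A)
  | pbox {n : ℕ} {R : Multiset (Rel α.Char)} {Γ : Multiset (LF α.Char)} {w u v : ℕ} {x : α.Char} {A B : Formula α.Char} (h : CanProp α 𝒜 R w u x) :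
      LDs α 𝒜 n R ((w, Formula.box x A) ::ₘ (u, A) ::ₘ Γ) v B →
      LDs α 𝒜 (n + 1) R ((w, Formula.box x A) ::ₘ Γ) v B

/-- Derivability in `L*_Σ(𝒜)`. -/
def LDerivS (α : Alphabet) (𝒜 : Set (Ax α.Char)) (R : Multiset (Rel α.Char))
    (Γ : Multiset (LF α.Char)) (w : ℕ) (A : Formula α.Char) : Prop :=
  ∃ n, LDs α 𝒜 n R Γ w A

/-! ### Label substitutions -/

/-- `subL v u l`: replace the label `v` by `u`. -/
def subL (v u l : ℕ) : ℕ := if l = v then u else l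

def subR {C : Type} (v u : ℕ) (R : Multiset (Rel C)) : Multiset (Rel C) :=
  R.map (fun a => (subL v u a.1, a.2.1, subL v u a.2.2))

def subG {C : Type} (v u : ℕ) (Γ : Multiset (LF C)) : Multiset (LF C) :=
  Γ.map (fun b => (subL v u b.1, b.2))

/-! ### Double-negation translations -/

/-- The double-negation translation on `L_Σ`. -/
def dnt {C : Type} : Formula C → Formula C
  | Formula.atom p => ((Formula.atom p).neg).neg
  | Formula.bot => ((Formula.bot : Formula C).neg).neg
  | Formula.or A B => (((dnt A).neg).and ((dnt B).neg)).neg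
  | Formula.and A B => (dnt A).and (dnt B)
  | Formula.imp A B => (dnt A).imp (dnt B)
  | Formula.dia x A => (Formula.box x ((dnt A).neg)).neg
  | Formula.box x A => Formula.box x (dnt A)

/-! ### The classical language and calculi -/

/-- Formulae of the classical language `L^C_Σ` (negation normal form). -/
inductive CForm (C : Type) : Type
  | pos : ℕ → CForm C
  | neg : ℕ → CForm C
  | or  : CForm C → CForm C → CForm C
  | and : CForm C → CForm C → CForm C
  | dia : C → CForm C → CForm C
  | box : C → CForm C → CForm C

/-- Classical negation, recursively extended to all formulae of `L^C_Σ`. -/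
def cneg {C : Type} : CForm C → CForm C
  | CForm.pos p => CForm.neg p
  | CForm.neg p => CForm.pos p
  | CForm.or A B => CForm.and (cneg A) (cneg B)
  | CForm.and A B => CForm.or (cneg A) (cneg B)
  | CForm.dia x A => CForm.box x (cneg A)
  | CForm.box x A => CForm.dia x (cneg A)

/-- `⊥ := p ∧ ¬p` for a fixed propositional atom. -/
def cbot {C : Type} : CForm C := CForm.and (CForm.pos 0) (CForm.neg 0)

/-- `A ⊃ B := ¬A ∨ B`. -/
def cimp {C : Type} (A B : CForm C) : CForm C := CForm.or (cneg A) B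

/-- Reading a formula of `L_Σ` as a formula of `L^C_Σ`. -/
def toC {C : Type} : Formula C → CForm C
  | Formula.atom p => CForm.pos p
  | Formula.bot => cbot
  | Formula.or A B => CForm.or (toC A) (toC B)
  | Formula.and A B => CForm.and (toC A) (toC B)
  | Formula.imp A B => cimp (toC A) (toC B)
  | Formula.dia x A => CForm.dia x (toC A)
  | Formula.box x A => CForm.box x (toC A)

/-- A classical labeled formula. -/
abbrev CLF (C : Type) := ℕ × CForm C

def clfLabels {C : Type} (Γ : Multiset (CLF C)) : Set ℕ :=
  {l | ∃ b ∈ Γ, b.1 = l}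

/-- The refined labeled calculus `L^C_Σ(𝒜)` for the corresponding classical
grammar logic, operating on one-sided sequents `R ⊢ Γ`. -/
inductive CLD (α : Alphabet) (𝒜 : Set (Ax α.Char)) :
    Multiset (Rel α.Char) → Multiset (CLF α.Char) → Prop
  | id (R : Multiset (Rel α.Char)) (Γ : Multiset (CLF α.Char)) (w p : ℕ) :
      CLD α 𝒜 R ((w, CForm.pos p) ::ₘ (w, CForm.neg p) ::ₘ Γ)
  | orR {R : Multiset (Rel α.Char)} {Γ : Multiset (CLF α.Char)} {w : ℕ}
      {A B : CForm α.Char} :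
      CLD α 𝒜 R ((w, A) ::ₘ (w, B) ::ₘ Γ) → CLD α 𝒜 R ((w, CForm.or A B) ::ₘ Γ)
  | andR {R : Multiset (Rel α.Char)} {Γ : Multiset (CLF α.Char)} {w : ℕ}
      {A B : CForm α.Char} :
      CLD α 𝒜 R ((w, A) ::ₘ Γ) → CLD α 𝒜 R ((w, B) ::ₘ Γ) →
      CLD α 𝒜 R ((w, CForm.and A B) ::ₘ Γ)
  | boxR {R : Multiset (Rel α.Char)} {Γ : Multiset (CLF α.Char)} {w u : ℕ}
      {x : α.Char} {A : CForm α.Char}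
      (hf : u ∉ relLabels R ∧ u ∉ clfLabels ((w, CForm.box x A) ::ₘ Γ)) :
      CLD α 𝒜 ((w, x, u) ::ₘ R) ((u, A) ::ₘ Γ) →
      CLD α 𝒜 R ((w, CForm.box x A) ::ₘ Γ)
  | dx {R : Multiset (Rel α.Char)} {Γ : Multiset (CLF α.Char)} {u : ℕ}
      {x : α.Char} (w : ℕ) (hax : Ax.ser x ∈ 𝒜)
      (hf : u ∉ relLabels R ∧ u ∉ clfLabels Γ) :
      CLD α 𝒜 ((w, x, u) ::ₘ R) Γ → CLD α 𝒜 R Γ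
  | diaR {R : Multiset (Rel α.Char)} {Γ : Multiset (CLF α.Char)} {w u : ℕ}
      {x : α.Char} {A : CForm α.Char} (h : CanProp α 𝒜 R w u x) :
      CLD α 𝒜 R ((w, CForm.dia x A) ::ₘ (u, A) ::ₘ Γ) →
      CLD α 𝒜 R ((w, CForm.dia x A) ::ₘ Γ)

/-- `⟨x₁⟩⋯⟨xₙ⟩A` in the classical language. -/
def cdias {C : Type} : List C → CForm C → CForm C
  | [], A => A
  | x :: s, A => CForm.dia x (cdias s A)

/-- The Hilbert system for the classical grammar logic `K_m(Σ,𝒜')` corresponding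
to `IK_m(Σ,𝒜)`: seriality axioms of `𝒜` are kept and each intuitionistic path
axiom contributes the path axiom `⟨x₁⟩⋯⟨xₙ⟩A ⊃ ⟨x⟩A`. -/
inductive Kprf (α : Alphabet) (𝒜 : Set (Ax α.Char)) : CForm α.Char → Prop
  | cpl1 (A B : CForm α.Char) : Kprf α 𝒜 (cimp A (cimp B A))
  | cpl2 (A B C : CForm α.Char) :
      Kprf α 𝒜 (cimp (cimp A (cimp B C)) (cimp (cimp A B) (cimp A C)))
  | cpl3 (A B : CForm α.Char) : Kprf α 𝒜 (cimp A (CForm.or A B))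
  | cpl4 (A B : CForm α.Char) : Kprf α 𝒜 (cimp B (CForm.or A B))
  | cpl5 (A B C : CForm α.Char) :
      Kprf α 𝒜 (cimp (cimp A C) (cimp (cimp B C) (cimp (CForm.or A B) C)))
  | cpl6 (A B : CForm α.Char) : Kprf α 𝒜 (cimp (CForm.and A B) A)
  | cpl7 (A B : CForm α.Char) : Kprf α 𝒜 (cimp (CForm.and A B) B)
  | cpl8 (A B : CForm α.Char) : Kprf α 𝒜 (cimp A (cimp B (CForm.and A B)))
  | cpl9 (A : CForm α.Char) : Kprf α 𝒜 (cimp cbot A)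
  | cpl10 (A : CForm α.Char) : Kprf α 𝒜 (CForm.or A (cneg A))
  | axK (x : α.Char) (A B : CForm α.Char) :
      Kprf α 𝒜 (cimp (CForm.box x (cimp A B)) (cimp (CForm.box x A) (CForm.box x B)))
  | axConv (x : α.Char) (A : CForm α.Char) :
      Kprf α 𝒜 (cimp A (CForm.box x (CForm.dia (α.conv x) A)))
  | axSer (x : α.Char) (A : CForm α.Char) (h : Ax.ser x ∈ 𝒜) :
      Kprf α 𝒜 (cimp (CForm.box x A) (CForm.dia x A))
  | axPath (x : α.Char) (s : List α.Char) (A : CForm α.Char) (h : Ax.ipa x s ∈ 𝒜) :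
      Kprf α 𝒜 (cimp (cdias s A) (CForm.dia x A))
  | mp (A B : CForm α.Char) : Kprf α 𝒜 (cimp A B) → Kprf α 𝒜 A → Kprf α 𝒜 B
  | nec (x : α.Char) (A : CForm α.Char) : Kprf α 𝒜 A → Kprf α 𝒜 (CForm.box x A)

/-- The double-negation translation from `L^C_Σ` into `L_Σ`. -/
def dntC {C : Type} : CForm C → Formula C
  | CForm.pos p => ((Formula.atom p).neg).neg
  | CForm.neg p => (((Formula.atom p).neg).neg).neg
  | CForm.or A B => (((dntC A).neg).and ((dntC B).neg)).neg
  | CForm.and A B => (dntC A).and (dntC B)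
  | CForm.dia x A => (Formula.box x ((dntC A).neg)).neg
  | CForm.box x A => Formula.box x (dntC A)

/-! ### Labeled tree sequents and derivation trees -/

/-- Reachability along the relational atoms of `R`. -/
def Reach {C : Type} (R : Multiset (Rel C)) (a b : ℕ) : Prop :=
  Relation.ReflTransGen (fun p q => ∃ x, (p, x, q) ∈ R) a b

/-- `R, Γ ⊢ w : ⋯` is a labeled tree sequent with root `r`. -/
def isTreeSeqRoot (α : Alphabet) (R : Multiset (Rel α.Char))
    (Γ : Multiset (LF α.Char)) (w r : ℕ) : Prop :=
  (R = 0 → r = w ∧ ∀ b ∈ Γ, b.1 = w) ∧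
  (R ≠ 0 →
    (∀ a ∈ R, a.2.2 ≠ r) ∧
    (∀ l : ℕ, l ≠ r → (R.filter (fun a => a.2.2 = l)).card ≤ 1) ∧
    (∀ l ∈ relLabels R, Reach R r l) ∧
    (∀ b ∈ Γ, b.1 ∈ relLabels R) ∧ w ∈ relLabels R)

/-- Proof trees (derivations) in the refined labeled calculus `L*_Σ(𝒜)`. -/
inductive DTree (α : Alphabet) (𝒜 : Set (Ax α.Char)) :
    Multiset (Rel α.Char) → Multiset (LF α.Char) → ℕ → Formula α.Char → Type
  | id (R : Multiset (Rel α.Char)) (Γ : Multiset (LF α.Char)) (w p : ℕ) :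
      DTree α 𝒜 R ((w, Formula.atom p) ::ₘ Γ) w (Formula.atom p)
  | botL (R : Multiset (Rel α.Char)) (Γ : Multiset (LF α.Char)) (w u : ℕ)
      (A : Formula α.Char) : DTree α 𝒜 R ((w, Formula.bot) ::ₘ Γ) u A
  | orL (R : Multiset (Rel α.Char)) (Γ : Multiset (LF α.Char)) (w u : ℕ)
      (A B C : Formula α.Char) :
      DTree α 𝒜 R ((w, A) ::ₘ Γ) u C → DTree α 𝒜 R ((w, B) ::ₘ Γ) u C →
      DTree α 𝒜 R ((w, A.or B) ::ₘ Γ) u C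
  | orR1 (R : Multiset (Rel α.Char)) (Γ : Multiset (LF α.Char)) (w : ℕ)
      (A B : Formula α.Char) : DTree α 𝒜 R Γ w A → DTree α 𝒜 R Γ w (A.or B)
  | orR2 (R : Multiset (Rel α.Char)) (Γ : Multiset (LF α.Char)) (w : ℕ)
      (A B : Formula α.Char) : DTree α 𝒜 R Γ w B → DTree α 𝒜 R Γ w (A.or B)
  | andL (R : Multiset (Rel α.Char)) (Γ : Multiset (LF α.Char)) (w u : ℕ)
      (A B C : Formula α.Char) :
      DTree α 𝒜 R ((w, A) ::ₘ (w, B) ::ₘ Γ) u C →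
      DTree α 𝒜 R ((w, A.and B) ::ₘ Γ) u C
  | andR (R : Multiset (Rel α.Char)) (Γ : Multiset (LF α.Char)) (w : ℕ)
      (A B : Formula α.Char) :
      DTree α 𝒜 R Γ w A → DTree α 𝒜 R Γ w B → DTree α 𝒜 R Γ w (A.and B)
  | impL (R : Multiset (Rel α.Char)) (Γ : Multiset (LF α.Char)) (w u : ℕ)
      (A B C : Formula α.Char) :
      DTree α 𝒜 R ((w, A.imp B) ::ₘ Γ) w A → DTree α 𝒜 R ((w, B) ::ₘ Γ) u C →
      DTree α 𝒜 R ((w, A.imp B) ::ₘ Γ) u C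
  | impR (R : Multiset (Rel α.Char)) (Γ : Multiset (LF α.Char)) (w : ℕ)
      (A B : Formula α.Char) :
      DTree α 𝒜 R ((w, A) ::ₘ Γ) w B → DTree α 𝒜 R Γ w (A.imp B)
  | diaL (R : Multiset (Rel α.Char)) (Γ : Multiset (LF α.Char)) (w u v : ℕ)
      (x : α.Char) (A B : Formula α.Char)
      (hf : freshIn u R ((w, Formula.dia x A) ::ₘ Γ) v) :
      DTree α 𝒜 ((w, x, u) ::ₘ R) ((u, A) ::ₘ Γ) v B →
      DTree α 𝒜 R ((w, Formula.dia x A) ::ₘ Γ) v B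
  | boxR (R : Multiset (Rel α.Char)) (Γ : Multiset (LF α.Char)) (w u : ℕ)
      (x : α.Char) (A : Formula α.Char) (hf : freshIn u R Γ w) :
      DTree α 𝒜 ((w, x, u) ::ₘ R) Γ u A → DTree α 𝒜 R Γ w (Formula.box x A)
  | dx (R : Multiset (Rel α.Char)) (Γ : Multiset (LF α.Char)) (w u v : ℕ)
      (x : α.Char) (A : Formula α.Char) (hax : Ax.ser x ∈ 𝒜)
      (hf : freshIn u R Γ v) :
      DTree α 𝒜 ((w, x, u) ::ₘ R) Γ v A → DTree α 𝒜 R Γ v A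
  | pdia (R : Multiset (Rel α.Char)) (Γ : Multiset (LF α.Char)) (w u : ℕ)
      (x : α.Char) (A : Formula α.Char) (h : CanProp α 𝒜 R w u x) :
      DTree α 𝒜 R Γ u A → DTree α 𝒜 R Γ w (Formula.dia x A)
  | pbox (R : Multiset (Rel α.Char)) (Γ : Multiset (LF α.Char)) (w u v : ℕ)
      (x : α.Char) (A B : Formula α.Char) (h : CanProp α 𝒜 R w u x) :
      DTree α 𝒜 R ((w, Formula.box x A) ::ₘ (u, A) ::ₘ Γ) v B →
      DTree α 𝒜 R ((w, Formula.box x A) ::ₘ Γ) v B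

/-- `EverySeq P d`: every labeled sequent occurring in the derivation `d`
satisfies `P`. -/
def EverySeq {α : Alphabet} {𝒜 : Set (Ax α.Char)}
    (P : Multiset (Rel α.Char) → Multiset (LF α.Char) → ℕ → Formula α.Char → Prop) :
    ∀ {R : Multiset (Rel α.Char)} {Γ : Multiset (LF α.Char)} {w : ℕ}
      {A : Formula α.Char}, DTree α 𝒜 R Γ w A → Prop
  | _, _, _, _, DTree.id R Γ w p => P R ((w, Formula.atom p) ::ₘ Γ) w (Formula.atom p)
  | _, _, _, _, DTree.botL R Γ w u A => P R ((w, Formula.bot) ::ₘ Γ) u A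
  | _, _, _, _, DTree.orL R Γ w u A B C d1 d2 =>
      P R ((w, A.or B) ::ₘ Γ) u C ∧ EverySeq P d1 ∧ EverySeq P d2
  | _, _, _, _, DTree.orR1 R Γ w A B d => P R Γ w (A.or B) ∧ EverySeq P d
  | _, _, _, _, DTree.orR2 R Γ w A B d => P R Γ w (A.or B) ∧ EverySeq P d
  | _, _, _, _, DTree.andL R Γ w u A B C d =>
      P R ((w, A.and B) ::ₘ Γ) u C ∧ EverySeq P d
  | _, _, _, _, DTree.andR R Γ w A B d1 d2 =>
      P R Γ w (A.and B) ∧ EverySeq P d1 ∧ EverySeq P d2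
  | _, _, _, _, DTree.impL R Γ w u A B C d1 d2 =>
      P R ((w, A.imp B) ::ₘ Γ) u C ∧ EverySeq P d1 ∧ EverySeq P d2
  | _, _, _, _, DTree.impR R Γ w A B d => P R Γ w (A.imp B) ∧ EverySeq P d
  | _, _, _, _, DTree.diaL R Γ w u v x A B _ d =>
      P R ((w, Formula.dia x A) ::ₘ Γ) v B ∧ EverySeq P d
  | _, _, _, _, DTree.boxR R Γ w u x A _ d =>
      P R Γ w (Formula.box x A) ∧ EverySeq P d
  | _, _, _, _, DTree.dx R Γ w u v x A _ _ d => P R Γ v A ∧ EverySeq P d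
  | _, _, _, _, DTree.pdia R Γ w u x A _ d =>
      P R Γ w (Formula.dia x A) ∧ EverySeq P d
  | _, _, _, _, DTree.pbox R Γ w u v x A B _ d =>
      P R ((w, Formula.box x A) ::ₘ Γ) v B ∧ EverySeq P d

/-! ### Auxiliary lemmas for double-negation elimination -/

section DNE

variable {α : Alphabet} {𝒜 : Set (Ax α.Char)}

/-- Height monotonicity for `LDs`. -/
lemma LDs.mono {n : ℕ} {R : Multiset (Rel α.Char)} {Γ : Multiset (LF α.Char)}
    {w : ℕ} {A : Formula α.Char} (h : LDs α 𝒜 n R Γ w A) :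
    ∀ m, n ≤ m → LDs α 𝒜 m R Γ w A := by
  induction h with
  | id n R Γ w p => exact fun m _ => LDs.id m R Γ w p
  | botL n R Γ w u A => exact fun m _ => LDs.botL m R Γ w u A
  | orL h1 h2 ih1 ih2 =>
      rintro (_ | m) hm
      · exact absurd hm (by omega)
      · exact LDs.orL (ih1 m (by omega)) (ih2 m (by omega))
  | orR1 h ih =>
      rintro (_ | m) hm
      · exact absurd hm (by omega)
      · exact LDs.orR1 (ih m (by omega))
  | orR2 h ih =>
      rintro (_ | m) hm
      · exact absurd hm (by omega)
      · exact LDs.orR2 (ih m (by omega))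
  | andL h ih =>
      rintro (_ | m) hm
      · exact absurd hm (by omega)
      · exact LDs.andL (ih m (by omega))
  | andR h1 h2 ih1 ih2 =>
      rintro (_ | m) hm
      · exact absurd hm (by omega)
      · exact LDs.andR (ih1 m (by omega)) (ih2 m (by omega))
  | impL h1 h2 ih1 ih2 =>
      rintro (_ | m) hm
      · exact absurd hm (by omega)
      · exact LDs.impL (ih1 m (by omega)) (ih2 m (by omega))
  | impR h ih =>
      rintro (_ | m) hm
      · exact absurd hm (by omega)
      · exact LDs.impR (ih m (by omega))
  | diaL hf h ih =>
      rintro (_ | m) hm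
      · exact absurd hm (by omega)
      · exact LDs.diaL hf (ih m (by omega))
  | boxR hf h ih =>
      rintro (_ | m) hm
      · exact absurd hm (by omega)
      · exact LDs.boxR hf (ih m (by omega))
  | dx w hax hf h ih =>
      rintro (_ | m) hm
      · exact absurd hm (by omega)
      · exact LDs.dx w hax hf (ih m (by omega))
  | pdia w hcp h ih =>
      rintro (_ | m) hm
      · exact absurd hm (by omega)
      · exact LDs.pdia w hcp (ih m (by omega))
  | pbox hcp h ih =>
      rintro (_ | m) hm
      · exact absurd hm (by omega)
      · exact LDs.pbox hcp (ih m (by omega))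

/-! `LDerivS`-level versions of the rules. -/

lemma DS.botL {R : Multiset (Rel α.Char)} {Γ : Multiset (LF α.Char)} {w u : ℕ}
    {A : Formula α.Char} : LDerivS α 𝒜 R ((w, Formula.bot) ::ₘ Γ) u A :=
  ⟨0, LDs.botL 0 R Γ w u A⟩

lemma DS.orL {R : Multiset (Rel α.Char)} {Γ : Multiset (LF α.Char)} {w u : ℕ}
    {A B C : Formula α.Char} (h1 : LDerivS α 𝒜 R ((w, A) ::ₘ Γ) u C)
    (h2 : LDerivS α 𝒜 R ((w, B) ::ₘ Γ) u C) :
    LDerivS α 𝒜 R ((w, A.or B) ::ₘ Γ) u C := by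
  obtain ⟨n1, h1⟩ := h1; obtain ⟨n2, h2⟩ := h2
  exact ⟨max n1 n2 + 1,
    LDs.orL (h1.mono _ (le_max_left _ _)) (h2.mono _ (le_max_right _ _))⟩

lemma DS.orR1 {R : Multiset (Rel α.Char)} {Γ : Multiset (LF α.Char)} {w : ℕ}
    {A B : Formula α.Char} (h : LDerivS α 𝒜 R Γ w A) :
    LDerivS α 𝒜 R Γ w (A.or B) := by
  obtain ⟨n, h⟩ := h; exact ⟨n + 1, LDs.orR1 h⟩

lemma DS.orR2 {R : Multiset (Rel α.Char)} {Γ : Multiset (LF α.Char)} {w : ℕ}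
    {A B : Formula α.Char} (h : LDerivS α 𝒜 R Γ w B) :
    LDerivS α 𝒜 R Γ w (A.or B) := by
  obtain ⟨n, h⟩ := h; exact ⟨n + 1, LDs.orR2 h⟩

lemma DS.andL {R : Multiset (Rel α.Char)} {Γ : Multiset (LF α.Char)} {w u : ℕ}
    {A B C : Formula α.Char} (h : LDerivS α 𝒜 R ((w, A) ::ₘ (w, B) ::ₘ Γ) u C) :
    LDerivS α 𝒜 R ((w, A.and B) ::ₘ Γ) u C := by
  obtain ⟨n, h⟩ := h; exact ⟨n + 1, LDs.andL h⟩

lemma DS.andR {R : Multiset (Rel α.Char)} {Γ : Multiset (LF α.Char)} {w : ℕ}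
    {A B : Formula α.Char} (h1 : LDerivS α 𝒜 R Γ w A) (h2 : LDerivS α 𝒜 R Γ w B) :
    LDerivS α 𝒜 R Γ w (A.and B) := by
  obtain ⟨n1, h1⟩ := h1; obtain ⟨n2, h2⟩ := h2
  exact ⟨max n1 n2 + 1,
    LDs.andR (h1.mono _ (le_max_left _ _)) (h2.mono _ (le_max_right _ _))⟩

lemma DS.impL {R : Multiset (Rel α.Char)} {Γ : Multiset (LF α.Char)} {w u : ℕ}
    {A B C : Formula α.Char} (h1 : LDerivS α 𝒜 R ((w, A.imp B) ::ₘ Γ) w A)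
    (h2 : LDerivS α 𝒜 R ((w, B) ::ₘ Γ) u C) :
    LDerivS α 𝒜 R ((w, A.imp B) ::ₘ Γ) u C := by
  obtain ⟨n1, h1⟩ := h1; obtain ⟨n2, h2⟩ := h2
  exact ⟨max n1 n2 + 1,
    LDs.impL (h1.mono _ (le_max_left _ _)) (h2.mono _ (le_max_right _ _))⟩

lemma DS.impR {R : Multiset (Rel α.Char)} {Γ : Multiset (LF α.Char)} {w : ℕ}
    {A B : Formula α.Char} (h : LDerivS α 𝒜 R ((w, A) ::ₘ Γ) w B) :
    LDerivS α 𝒜 R Γ w (A.imp B) := by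
  obtain ⟨n, h⟩ := h; exact ⟨n + 1, LDs.impR h⟩

lemma DS.diaL {R : Multiset (Rel α.Char)} {Γ : Multiset (LF α.Char)} {w u v : ℕ}
    {x : α.Char} {A B : Formula α.Char}
    (hf : freshIn u R ((w, Formula.dia x A) ::ₘ Γ) v)
    (h : LDerivS α 𝒜 ((w, x, u) ::ₘ R) ((u, A) ::ₘ Γ) v B) :
    LDerivS α 𝒜 R ((w, Formula.dia x A) ::ₘ Γ) v B := by
  obtain ⟨n, h⟩ := h; exact ⟨n + 1, LDs.diaL hf h⟩

lemma DS.boxR {R : Multiset (Rel α.Char)} {Γ : Multiset (LF α.Char)} {w u : ℕ}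
    {x : α.Char} {A : Formula α.Char} (hf : freshIn u R Γ w)
    (h : LDerivS α 𝒜 ((w, x, u) ::ₘ R) Γ u A) :
    LDerivS α 𝒜 R Γ w (Formula.box x A) := by
  obtain ⟨n, h⟩ := h; exact ⟨n + 1, LDs.boxR hf h⟩

lemma DS.pdia {R : Multiset (Rel α.Char)} {Γ : Multiset (LF α.Char)} {u : ℕ}
    {x : α.Char} {A : Formula α.Char} (w : ℕ) (hcp : CanProp α 𝒜 R w u x)
    (h : LDerivS α 𝒜 R Γ u A) : LDerivS α 𝒜 R Γ w (Formula.dia x A) := by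
  obtain ⟨n, h⟩ := h; exact ⟨n + 1, LDs.pdia w hcp h⟩

lemma DS.pbox {R : Multiset (Rel α.Char)} {Γ : Multiset (LF α.Char)} {w u v : ℕ}
    {x : α.Char} {A B : Formula α.Char} (hcp : CanProp α 𝒜 R w u x)
    (h : LDerivS α 𝒜 R ((w, Formula.box x A) ::ₘ (u, A) ::ₘ Γ) v B) :
    LDerivS α 𝒜 R ((w, Formula.box x A) ::ₘ Γ) v B := by
  obtain ⟨n, h⟩ := h; exact ⟨n + 1, LDs.pbox hcp h⟩

/-- Existence of a fresh label. -/
lemma exists_fresh (R : Multiset (Rel α.Char)) (Γ : Multiset (LF α.Char))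
    (v : ℕ) : ∃ u, freshIn u R Γ v := by
  classical
  set S : Multiset ℕ :=
    R.map (fun a => max a.1 a.2.2) + Γ.map Prod.fst + {v} with hS
  refine ⟨S.sup + 1, ?_, ?_, ?_⟩
  · rintro ⟨a, ha, h⟩
    have hm : max a.1 a.2.2 ∈ S := by
      rw [hS]
      refine Multiset.mem_add.2 (Or.inl (Multiset.mem_add.2 (Or.inl ?_)))
      exact Multiset.mem_map_of_mem _ ha
    have h1 : max a.1 a.2.2 ≤ S.sup := Multiset.le_sup hm
    have h2 : a.1 ≤ S.sup := le_trans (le_max_left _ _) h1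
    have h3 : a.2.2 ≤ S.sup := le_trans (le_max_right _ _) h1
    rcases h with h | h <;> omega
  · rintro ⟨b, hb, h⟩
    have hm : b.1 ∈ S := by
      rw [hS]
      refine Multiset.mem_add.2 (Or.inl (Multiset.mem_add.2 (Or.inr ?_)))
      exact Multiset.mem_map_of_mem _ hb
    have h1 : b.1 ≤ S.sup := Multiset.le_sup hm
    omega
  · have hm : v ∈ S := by
      rw [hS]
      exact Multiset.mem_add.2 (Or.inr (Multiset.mem_singleton_self v))
    have h1 : v ≤ S.sup := Multiset.le_sup hm
    omega

/-- A single relational atom gives a propagation path. -/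
lemma canProp_edge {R : Multiset (Rel α.Char)} {w u : ℕ} {x : α.Char}
    (h : (w, x, u) ∈ R) : CanProp α 𝒜 R w u x :=
  ⟨[x], PPath.cons (Or.inl h) (PPath.nil u), Relation.ReflTransGen.refl⟩

/-- The general identity lemma for `L*_Σ(𝒜)`. -/
lemma idLem (B : Formula α.Char) :
    ∀ (R : Multiset (Rel α.Char)) (Γ : Multiset (LF α.Char)) (w : ℕ),
      LDerivS α 𝒜 R ((w, B) ::ₘ Γ) w B := by
  induction B with
  | atom p => exact fun R Γ w => ⟨0, LDs.id 0 R Γ w p⟩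
  | bot => exact fun R Γ w => DS.botL
  | or A B ihA ihB =>
      intro R Γ w
      exact DS.orL (DS.orR1 (ihA R Γ w)) (DS.orR2 (ihB R Γ w))
  | and A B ihA ihB =>
      intro R Γ w
      apply DS.andL
      refine DS.andR (ihA R ((w, B) ::ₘ Γ) w) ?_
      rw [Multiset.cons_swap]
      exact ihB R ((w, A) ::ₘ Γ) w
  | imp A B ihA ihB =>
      intro R Γ w
      apply DS.impR
      rw [Multiset.cons_swap]
      refine DS.impL ?_ (ihB R ((w, A) ::ₘ Γ) w)
      rw [Multiset.cons_swap]
      exact ihA R ((w, A.imp B) ::ₘ Γ) w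
  | dia x A ih =>
      intro R Γ w
      obtain ⟨u, hu⟩ := exists_fresh R ((w, Formula.dia x A) ::ₘ Γ) w
      apply DS.diaL hu
      exact DS.pdia w (canProp_edge (Multiset.mem_cons_self _ _))
        (ih ((w, x, u) ::ₘ R) Γ u)
  | box x A ih =>
      intro R Γ w
      obtain ⟨u, hu⟩ := exists_fresh R ((w, Formula.box x A) ::ₘ Γ) w
      apply DS.boxR hu
      apply DS.pbox (canProp_edge (Multiset.mem_cons_self _ _))
      rw [Multiset.cons_swap]
      exact ih ((w, x, u) ::ₘ R) ((w, Formula.box x A) ::ₘ Γ) u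

/-- Identity from a membership hypothesis. -/
lemma idMem {R : Multiset (Rel α.Char)} {Γ : Multiset (LF α.Char)} {w : ℕ}
    {B : Formula α.Char} (h : (w, B) ∈ Γ) : LDerivS α 𝒜 R Γ w B := by
  obtain ⟨Γ₀, rfl⟩ := Multiset.exists_cons_of_mem h
  exact idLem B R Γ₀ w

/-- `HypAt R Γ w A`: the context `Γ` (together with `R`) provides, at the label
`w`, a hypothesis from which `¬¬(A^N)` follows intuitionistically. -/
inductive HypAt (α : Alphabet) (𝒜 : Set (Ax α.Char)) (R : Multiset (Rel α.Char))
    (Γ : Multiset (LF α.Char)) : ℕ → Formula α.Char → Prop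
  | mem {w : ℕ} {A : Formula α.Char} :
      (w, ((dnt A).neg).neg) ∈ Γ → HypAt α 𝒜 R Γ w A
  | andE1 {w : ℕ} {A B : Formula α.Char} :
      HypAt α 𝒜 R Γ w (A.and B) → HypAt α 𝒜 R Γ w A
  | andE2 {w : ℕ} {A B : Formula α.Char} :
      HypAt α 𝒜 R Γ w (A.and B) → HypAt α 𝒜 R Γ w B
  | impE {w : ℕ} {A B : Formula α.Char} :
      HypAt α 𝒜 R Γ w (A.imp B) → (w, dnt A) ∈ Γ → HypAt α 𝒜 R Γ w B
  | boxE {w u : ℕ} {x : α.Char} {A : Formula α.Char} :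
      HypAt α 𝒜 R Γ w (Formula.box x A) → CanProp α 𝒜 R w u x →
      HypAt α 𝒜 R Γ u A

lemma PPath.mono {R R' : Multiset (Rel α.Char)} (hR : R ≤ R') :
    ∀ {w u : ℕ} {s : List α.Char}, PPath α R w u s → PPath α R' w u s := by
  intro w u s h
  induction h with
  | nil w => exact PPath.nil w
  | cons he _ ih =>
      refine PPath.cons ?_ ih
      rcases he with he | he
      · exact Or.inl (Multiset.mem_of_le hR he)
      · exact Or.inr (Multiset.mem_of_le hR he)

lemma CanProp.mono {R R' : Multiset (Rel α.Char)} {w u : ℕ} {x : α.Char}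
    (hR : R ≤ R') (h : CanProp α 𝒜 R w u x) : CanProp α 𝒜 R' w u x := by
  obtain ⟨s, hp, hl⟩ := h
  exact ⟨s, hp.mono hR, hl⟩

lemma HypAt.mono {R R' : Multiset (Rel α.Char)} {Γ Γ' : Multiset (LF α.Char)}
    {w : ℕ} {A : Formula α.Char} (h : HypAt α 𝒜 R Γ w A) (hR : R ≤ R')
    (hΓ : Γ ≤ Γ') : HypAt α 𝒜 R' Γ' w A := by
  induction h with
  | mem hm => exact HypAt.mem (Multiset.mem_of_le hΓ hm)
  | andE1 _ ih => exact HypAt.andE1 ih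
  | andE2 _ ih => exact HypAt.andE2 ih
  | impE _ hm ih => exact HypAt.impE ih (Multiset.mem_of_le hΓ hm)
  | boxE _ hcp ih => exact HypAt.boxE ih (hcp.mono hR)

/-- Using a hypothesis: if `Γ` provides a hypothesis for `A` at `w`, and `⊥`
follows from `w : A^N` over any extension of `Γ`, then `⊥` follows from `Γ`. -/
lemma useHyp {R : Multiset (Rel α.Char)} {Γ : Multiset (LF α.Char)} {w : ℕ}
    {A : Formula α.Char} (h : HypAt α 𝒜 R Γ w A) :
    ∀ v : ℕ, (∀ (Γ' : Multiset (LF α.Char)) (v' : ℕ), Γ ≤ Γ' →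
        LDerivS α 𝒜 R ((w, dnt A) ::ₘ Γ') v' Formula.bot) →
      LDerivS α 𝒜 R Γ v Formula.bot := by
  induction h with
  | @mem w A hm =>
      intro v K
      obtain ⟨Γ₀, rfl⟩ := Multiset.exists_cons_of_mem hm
      refine DS.impL ?_ DS.botL
      apply DS.impR
      exact K ((w, ((dnt A).neg).neg) ::ₘ Γ₀) w le_rfl
  | @andE1 w A B _ ih =>
      intro v K
      refine ih v ?_
      intro Γ' v' hle
      show LDerivS α 𝒜 R ((w, (dnt A).and (dnt B)) ::ₘ Γ') v' Formula.bot
      apply DS.andL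
      exact K ((w, dnt B) ::ₘ Γ') v' (hle.trans (Multiset.le_cons_self _ _))
  | @andE2 w A B _ ih =>
      intro v K
      refine ih v ?_
      intro Γ' v' hle
      show LDerivS α 𝒜 R ((w, (dnt A).and (dnt B)) ::ₘ Γ') v' Formula.bot
      apply DS.andL
      rw [Multiset.cons_swap]
      exact K ((w, dnt A) ::ₘ Γ') v' (hle.trans (Multiset.le_cons_self _ _))
  | @impE w A B _ hm ih =>
      intro v K
      refine ih v ?_
      intro Γ' v' hle
      show LDerivS α 𝒜 R ((w, (dnt A).imp (dnt B)) ::ₘ Γ') v' Formula.bot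
      refine DS.impL ?_ (K Γ' v' hle)
      exact idMem (Multiset.mem_cons_of_mem (Multiset.mem_of_le hle hm))
  | @boxE w u x A _ hcp ih =>
      intro v K
      refine ih v ?_
      intro Γ' v' hle
      show LDerivS α 𝒜 R ((w, Formula.box x (dnt A)) ::ₘ Γ') v' Formula.bot
      apply DS.pbox hcp
      rw [Multiset.cons_swap]
      exact K ((w, Formula.box x (dnt A)) ::ₘ Γ') v'
        (hle.trans (Multiset.le_cons_self _ _))

/-- The case of the main lemma where `A^N` is a negation. -/
lemma negCase {R : Multiset (Rel α.Char)} {Γ : Multiset (LF α.Char)} {w : ℕ}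
    {A C : Formula α.Char} (hC : dnt A = C.neg) (h : HypAt α 𝒜 R Γ w A) :
    LDerivS α 𝒜 R Γ w (C.neg) := by
  apply DS.impR
  refine useHyp (h.mono le_rfl (Multiset.le_cons_self _ _)) w ?_
  intro Γ' v' hle
  rw [hC]
  refine DS.impL ?_ DS.botL
  refine idMem (Multiset.mem_cons_of_mem ?_)
  exact Multiset.mem_of_le hle (Multiset.mem_cons_self _ _)

/-- Main lemma: a hypothesis for `A` yields `A^N`. -/
lemma mainHyp : ∀ (A : Formula α.Char) {R : Multiset (Rel α.Char)}
    {Γ : Multiset (LF α.Char)} {w : ℕ},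
    HypAt α 𝒜 R Γ w A → LDerivS α 𝒜 R Γ w (dnt A) := by
  intro A
  induction A with
  | atom p => exact fun h => negCase (A := Formula.atom p) (C := (Formula.atom p).neg) rfl h
  | bot => exact fun h => negCase (A := Formula.bot) (C := Formula.bot.neg) rfl h
  | or A B ihA ihB => exact fun h => negCase (A := A.or B) (C := ((dnt A).neg).and ((dnt B).neg)) rfl h
  | dia x A ih => exact fun h => negCase (A := Formula.dia x A) (C := Formula.box x ((dnt A).neg)) rfl h
  | and A B ihA ihB =>
      intro R Γ w h
      exact DS.andR (ihA h.andE1) (ihB h.andE2)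
  | imp A B ihA ihB =>
      intro R Γ w h
      apply DS.impR
      exact ihB (HypAt.impE (h.mono le_rfl (Multiset.le_cons_self _ _))
        (Multiset.mem_cons_self _ _))
  | box x A ih =>
      intro R Γ w h
      obtain ⟨u, hu⟩ := exists_fresh R Γ w
      apply DS.boxR hu
      exact ih (HypAt.boxE (h.mono (Multiset.le_cons_self _ _) le_rfl)
        (canProp_edge (Multiset.mem_cons_self _ _)))

end DNE

/-- **Double-negation elimination for translated formulae**: for every formula
`A ∈ L_Σ`, the labeled sequent `w : ¬¬(A^N) ⊢ w : A^N` is derivable in the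
refined labeled calculus `L*_Σ(𝒜)`. -/
theorem dn_elim_translated (α : Alphabet) (𝒜 : Set (Ax α.Char)) (w : ℕ)
    (A : Formula α.Char) :
    LDerivS α 𝒜 0 ((w, ((dnt A).neg).neg) ::ₘ 0) w (dnt A) :=
  mainHyp A (HypAt.mem (Multiset.mem_cons_self _ _))

end IGL
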